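/- Let n ≥ 2 and let μ be the uniform probability measure on the sphere S^{n−1}(r) = {v ∈ ℝ^n : ‖v‖ = r} for some r > 0. Then for every u ∈ ℝ^n, the integral ∫_{S^{n−1}(r)} ‖u − v‖^{2−n} dμ(v) is finite. -/

import Mathlib

/-!
Orthogonal projection onto the tangent hyperplane at a point `p` of the sphere `S` of radius
`r` is `3`-antilipschitz on the cap `S ∩ B(p, ρ)` for `ρ ≤ r`, so such caps have
`(n-1)`-dimensional Hausdorff measure `O(ρ^(n-1))`, and `S` itself has finite measure. Around an
arbitrary `u`, the dyadic shell of `S` at distance `≈ r 2^(-k)` from `u` then contributes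
`O(2^(k(n-2)) 2^(-k(n-1))) = O(2^(-k))` to the integral: a convergent geometric series.
-/

open MeasureTheory Metric Set Module
open scoped ENNReal NNReal RealInnerProductSpace

theorem closedBall_inter_subset_closedBall_inter_of_infDist_eq {X : Type*}
    [PseudoMetricSpace X] {s : Set X} {x p : X} (hp : infDist x s = dist x p) (ρ : ℝ) :
    closedBall x ρ ∩ s ⊆ closedBall p (2 * ρ) ∩ s := by
  rintro v ⟨hv, hvs⟩
  rw [mem_closedBall] at hv
  refine ⟨?_, hvs⟩
  calc dist v p ≤ dist v x + dist x p := dist_triangle _ _ _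
    _ ≤ ρ + ρ := add_le_add hv <| by
        rw [← hp, dist_comm] at *
        exact (infDist_le_dist_of_mem hvs).trans hv
    _ = 2 * ρ := by ring

section Dyadic

variable {X : Type*} [PseudoMetricSpace X] {t R : ℝ}

theorem ofReal_rpow_neg_dist_le_add_tsum_indicator (ht : 0 ≤ t) (hR : 0 < R) (x y : X) :
    ENNReal.ofReal (dist x y ^ (-t)) ≤ ENNReal.ofReal (R ^ (-t)) +
      ∑' k : ℕ, (closedBall x (R / 2 ^ k)).indicator
        (fun _ ↦ ENNReal.ofReal ((R / 2 ^ (k + 1)) ^ (-t))) y := by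
  rcases le_or_gt R (dist x y) with hfar | hnear
  · exact le_add_right (ENNReal.ofReal_le_ofReal
      (Real.rpow_le_rpow_of_nonpos hR hfar (neg_nonpos.2 ht)))
  rcases (dist_nonneg (x := x) (y := y)).eq_or_lt with hzero | hpos
  -- `0 ^ (-t)` is `1` for `t = 0` and `0` otherwise
  · refine le_add_right (ENNReal.ofReal_le_ofReal ?_)
    rw [← hzero]
    rcases ht.eq_or_lt with rfl | ht
    · simp
    · rw [Real.zero_rpow (neg_ne_zero.2 ht.ne')]
      positivity
  obtain ⟨k, hk, hk'⟩ := exists_nat_pow_near (one_le_div_iff.2 (Or.inl ⟨hpos, hnear.le⟩))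
    one_lt_two
  have hin : y ∈ closedBall x (R / 2 ^ k) := by
    rw [mem_closedBall', le_div_iff₀ (by positivity)]
    rwa [le_div_iff₀ hpos, mul_comm] at hk
  have hlt : R / 2 ^ (k + 1) < dist x y := by
    rwa [div_lt_iff₀ (by positivity), ← div_lt_iff₀' hpos]
  calc ENNReal.ofReal (dist x y ^ (-t))
      ≤ ENNReal.ofReal ((R / 2 ^ (k + 1)) ^ (-t)) :=
        ENNReal.ofReal_le_ofReal
          (Real.rpow_le_rpow_of_nonpos (by positivity) hlt.le (neg_nonpos.2 ht))
    _ = (closedBall x (R / 2 ^ k)).indicator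
          (fun _ ↦ ENNReal.ofReal ((R / 2 ^ (k + 1)) ^ (-t))) y := by
        rw [indicator_of_mem hin]
    _ ≤ _ := (ENNReal.le_tsum k).trans le_add_self

theorem rpow_neg_div_two_pow_succ_mul_rpow_div_two_pow {s : ℝ} (hR : 0 < R) (k : ℕ) :
    (R / 2 ^ (k + 1)) ^ (-t) * (R / 2 ^ k) ^ s = 2 ^ t * R ^ (s - t) * (2 ^ (t - s)) ^ k := by
  have h2k : (0 : ℝ) < 2 ^ k := by positivity
  rw [pow_succ, ← div_div, Real.div_rpow (by positivity) zero_le_two, Real.rpow_neg zero_le_two,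
    div_inv_eq_mul, mul_right_comm, ← Real.rpow_add (by positivity), Real.div_rpow hR.le h2k.le,
    ← Real.rpow_natCast, ← Real.rpow_mul zero_le_two, ← Real.rpow_natCast (2 ^ (t - s)),
    ← Real.rpow_mul zero_le_two, div_eq_mul_inv, ← Real.rpow_neg zero_le_two]
  ring_nf

theorem lintegral_ofReal_rpow_neg_dist_lt_top [MeasurableSpace X] [OpensMeasurableSpace X]
    {μ : Measure X} [IsFiniteMeasure μ] {x : X} {s : ℝ} {C : ℝ≥0∞} (hC : C ≠ ⊤)
    (ht : 0 ≤ t) (hts : t < s) (hR : 0 < R)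
    (hball : ∀ ρ, 0 < ρ → ρ ≤ R → μ (closedBall x ρ) ≤ C * ENNReal.ofReal (ρ ^ s)) :
    ∫⁻ y, ENNReal.ofReal (dist x y ^ (-t)) ∂μ < ⊤ := by
  have hshell (k : ℕ) : ENNReal.ofReal ((R / 2 ^ (k + 1)) ^ (-t)) * μ (closedBall x (R / 2 ^ k))
      ≤ C * ENNReal.ofReal (2 ^ t * R ^ (s - t)) * ENNReal.ofReal (2 ^ (t - s)) ^ k := by
    have hk : R / 2 ^ k ≤ R := div_le_self hR.le (one_le_pow₀ one_le_two)
    calc _ ≤ ENNReal.ofReal ((R / 2 ^ (k + 1)) ^ (-t)) * (C * ENNReal.ofReal ((R / 2 ^ k) ^ s)) :=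
          mul_le_mul_right (hball _ (by positivity) hk) _
      _ = C * ENNReal.ofReal (2 ^ t * R ^ (s - t)) * ENNReal.ofReal (2 ^ (t - s)) ^ k := by
        rw [mul_left_comm, ← ENNReal.ofReal_mul (by positivity),
          rpow_neg_div_two_pow_succ_mul_rpow_div_two_pow hR, ENNReal.ofReal_mul (by positivity),
          ENNReal.ofReal_pow (by positivity), mul_assoc]
  have hq : ENNReal.ofReal (2 ^ (t - s)) < 1 :=
    ENNReal.ofReal_lt_one.2 (Real.rpow_lt_one_of_one_lt_of_neg one_lt_two (sub_neg.2 hts))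
  calc ∫⁻ y, ENNReal.ofReal (dist x y ^ (-t)) ∂μ
      ≤ ∫⁻ y, ENNReal.ofReal (R ^ (-t)) + ∑' k : ℕ, (closedBall x (R / 2 ^ k)).indicator
          (fun _ ↦ ENNReal.ofReal ((R / 2 ^ (k + 1)) ^ (-t))) y ∂μ :=
        lintegral_mono (ofReal_rpow_neg_dist_le_add_tsum_indicator ht hR x)
    _ = ENNReal.ofReal (R ^ (-t)) * μ univ + ∑' k : ℕ,
          ENNReal.ofReal ((R / 2 ^ (k + 1)) ^ (-t)) * μ (closedBall x (R / 2 ^ k)) := by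
        rw [lintegral_add_left measurable_const, lintegral_const, lintegral_tsum fun k ↦
          (measurable_const.indicator measurableSet_closedBall).aemeasurable]
        simp_rw [lintegral_indicator_const measurableSet_closedBall]
    _ ≤ ENNReal.ofReal (R ^ (-t)) * μ univ + C * ENNReal.ofReal (2 ^ t * R ^ (s - t)) *
          ∑' k : ℕ, ENNReal.ofReal (2 ^ (t - s)) ^ k := by
        rw [← ENNReal.tsum_mul_left]
        exact add_le_add_right (ENNReal.tsum_le_tsum hshell) _
    _ < ⊤ := ENNReal.add_lt_top.2
        ⟨ENNReal.mul_lt_top ENNReal.ofReal_lt_top (measure_lt_top _ _),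
          ENNReal.mul_lt_top (ENNReal.mul_lt_top hC.lt_top ENNReal.ofReal_lt_top)
            (tsum_geometric_lt_top.2 hq)⟩

end Dyadic

section Sphere

variable {E : Type*} [NormedAddCommGroup E] [InnerProductSpace ℝ E]

theorem norm_le_three_mul_norm_starProjection_orthogonal_singleton {e q s : E} (he : ‖e‖ = 1)
    (hqs : ⟪q, s⟫ = 0) (hs : 0 < ⟪e, s⟫) (hse : ‖s‖ ≤ 2 * ⟪e, s⟫) :
    ‖q‖ ≤ 3 * ‖(ℝ ∙ e)ᗮ.starProjection q‖ := by
  set β := (ℝ ∙ e)ᗮ.starProjection q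
  have hq : ⟪e, q⟫ • e + β = q := by
    rw [← Submodule.starProjection_unit_singleton ℝ he]
    exact (ℝ ∙ e).starProjection_add_starProjection_orthogonal q
  have hsplit : ⟪e, q⟫ * ⟪e, s⟫ + ⟪β, s⟫ = 0 := by
    rw [← hqs]
    conv_rhs => rw [← hq]
    rw [inner_add_left, real_inner_smul_left]
  have hβs : |⟪e, q⟫| * ⟪e, s⟫ ≤ ‖β‖ * (2 * ⟪e, s⟫) :=
    calc |⟪e, q⟫| * ⟪e, s⟫ = |⟪β, s⟫| := by
          rw [eq_neg_of_add_eq_zero_right hsplit, abs_neg, abs_mul, abs_of_pos hs]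
      _ ≤ ‖β‖ * ‖s‖ := abs_real_inner_le_norm β s
      _ ≤ ‖β‖ * (2 * ⟪e, s⟫) := mul_le_mul_of_nonneg_left hse (norm_nonneg β)
  have hcoef : |⟪e, q⟫| ≤ 2 * ‖β‖ := by nlinarith
  calc ‖q‖ = ‖⟪e, q⟫ • e + β‖ := by rw [hq]
    _ ≤ |⟪e, q⟫| + ‖β‖ := by
        simpa [norm_smul, he] using norm_add_le (⟪e, q⟫ • e) β
    _ ≤ 3 * ‖β‖ := by linarith

theorem antilipschitzWith_orthogonalProjectionOnto_of_le_two_mul_inner {e : E} (he : ‖e‖ = 1)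
    {r : ℝ} (hr : 0 < r) {s : Set E} (hs : ∀ v ∈ s, ‖v‖ = r ∧ r ≤ 2 * ⟪e, v⟫) :
    AntilipschitzWith 3 (fun v : s ↦ (ℝ ∙ e)ᗮ.orthogonalProjectionOnto (v : E)) := by
  refine AntilipschitzWith.of_le_mul_dist fun v w ↦ ?_
  obtain ⟨hv, hev⟩ := hs v v.2
  obtain ⟨hw, hew⟩ := hs w w.2
  have hsum : r ≤ ⟪e, (v : E) + w⟫ := by linarith [inner_add_right (𝕜 := ℝ) e (v : E) w]
  rw [Subtype.dist_eq, dist_eq_norm, dist_eq_norm, ← map_sub, NNReal.coe_ofNat]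
  refine norm_le_three_mul_norm_starProjection_orthogonal_singleton he ?_ (by linarith) ?_
  · rw [real_inner_comm]
    exact (real_inner_add_sub_eq_zero_iff _ _).2 (hv.trans hw.symm)
  · linarith [norm_add_le (v : E) w]

variable [FiniteDimensional ℝ E] [MeasurableSpace E] [BorelSpace E]

theorem hausdorffMeasure_closedBall_inter_sphere_le {p : E} {r : ℝ} (hr : 0 < r)
    (hp : ‖p‖ = r) :
    ∃ C : ℝ≥0∞, C ≠ ⊤ ∧ ∀ ρ, 0 ≤ ρ → ρ ≤ r →
      μH[(finrank ℝ E : ℝ) - 1] (closedBall p ρ ∩ sphere 0 r)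
        ≤ C * ENNReal.ofReal (ρ ^ ((finrank ℝ E : ℝ) - 1)) := by
  set e := r⁻¹ • p
  have he : ‖e‖ = 1 := by
    rw [norm_smul, hp, norm_inv, Real.norm_of_nonneg hr.le, inv_mul_cancel₀ hr.ne']
  set K := (ℝ ∙ e)ᗮ
  set P := K.orthogonalProjectionOnto
  have hd : (finrank ℝ E : ℝ) - 1 = finrank ℝ K := by
    have := (ℝ ∙ e).finrank_add_finrank_orthogonal
    rw [finrank_span_singleton (norm_ne_zero_iff.1 (he ▸ one_ne_zero))] at this
    rw [← this]; push_cast; ring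
  refine ⟨(3 : ℝ≥0) ^ (finrank ℝ K : ℝ) *
      μH[(finrank ℝ K : ℝ)] (closedBall (0 : K) 1),
    ENNReal.mul_ne_top (by simp) measure_closedBall_lt_top.ne, fun ρ hρ hρr ↦ ?_⟩
  set cap := closedBall p ρ ∩ sphere 0 r
  have hmem : ∀ v ∈ cap, ‖v‖ = r ∧ r ≤ 2 * ⟪e, v⟫ := by
    rintro v ⟨hvp, hv⟩
    rw [mem_closedBall, dist_eq_norm] at hvp
    rw [mem_sphere_zero_iff_norm] at hv
    have hvp2 : r ^ 2 ≤ 2 * ⟪v, p⟫ := by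
      nlinarith [norm_sub_sq_real v p, norm_nonneg (v - p)]
    refine ⟨hv, ?_⟩
    calc r = r⁻¹ * r ^ 2 := by field_simp
      _ ≤ r⁻¹ * (2 * ⟪v, p⟫) := by gcongr
      _ = 2 * ⟪e, v⟫ := by rw [real_inner_smul_left, real_inner_comm]; ring
  have hanti : AntilipschitzWith 3 (fun v : cap ↦ P v) :=
    antilipschitzWith_orthogonalProjectionOnto_of_le_two_mul_inner he hr hmem
  have hmaps : range (fun v : cap ↦ P v) ⊆ closedBall (P p) ρ := by
    rintro - ⟨v, rfl⟩
    exact (K.lipschitzWith_orthogonalProjectionOnto.dist_le_mul v p).trans (by simpa using v.2.1)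
  rw [hd]
  calc μH[(finrank ℝ K : ℝ)] cap = μH[(finrank ℝ K : ℝ)] (univ : Set cap) := by
        conv_lhs => rw [← Subtype.coe_image_univ cap]
        exact isometry_subtype_coe.hausdorffMeasure_image (Or.inl (Nat.cast_nonneg _)) _
    _ ≤ (3 : ℝ≥0) ^ (finrank ℝ K : ℝ) *
          μH[(finrank ℝ K : ℝ)] (range (fun v : cap ↦ P v)) := by
        simpa using hanti.le_hausdorffMeasure_image (Nat.cast_nonneg _) univ
    _ ≤ (3 : ℝ≥0) ^ (finrank ℝ K : ℝ) *
          μH[(finrank ℝ K : ℝ)] (closedBall (P p) ρ) := by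
        gcongr
    _ = _ := by
        rw [Measure.addHaar_closedBall' _ _ hρ, Real.rpow_natCast]
        ring

theorem hausdorffMeasure_sphere_lt_top {r : ℝ} (hr : 0 < r) :
    μH[(finrank ℝ E : ℝ) - 1] (sphere (0 : E) r) < ⊤ := by
  obtain ⟨t, htS, hcover⟩ := (isCompact_sphere (0 : E) r).elim_nhds_subcover
    (fun p ↦ closedBall p r) fun p _ ↦ closedBall_mem_nhds p hr
  calc μH[(finrank ℝ E : ℝ) - 1] (sphere (0 : E) r)
      ≤ μH[(finrank ℝ E : ℝ) - 1] (⋃ p ∈ t, closedBall p r ∩ sphere 0 r) := by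
        refine measure_mono fun v hv ↦ ?_
        obtain ⟨p, hp, hvp⟩ := mem_iUnion₂.1 (hcover hv)
        exact mem_iUnion₂.2 ⟨p, hp, hvp, hv⟩
    _ ≤ ∑ p ∈ t, μH[(finrank ℝ E : ℝ) - 1] (closedBall p r ∩ sphere 0 r) :=
        measure_biUnion_finset_le _ _
    _ < ⊤ := ENNReal.sum_lt_top.2 fun p hp ↦ by
        obtain ⟨C, hC, hcap⟩ :=
          hausdorffMeasure_closedBall_inter_sphere_le hr (mem_sphere_zero_iff_norm.1 (htS p hp))
        exact (hcap r hr.le le_rfl).trans_lt (ENNReal.mul_lt_top hC.lt_top ENNReal.ofReal_lt_top)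

theorem lintegral_rpow_neg_norm_sub_sphere_lt_top {r t : ℝ} (hr : 0 < r) (ht : 0 ≤ t)
    (htE : t < finrank ℝ E - 1) (u : E) :
    ∫⁻ v in sphere 0 r, ENNReal.ofReal (‖u - v‖ ^ (-t)) ∂μH[(finrank ℝ E : ℝ) - 1]
      < ⊤ := by
  have : Nontrivial E :=
    finrank_pos_iff.1 (by exact_mod_cast (by linarith : (0 : ℝ) < finrank ℝ E))
  have : IsFiniteMeasure (μH[(finrank ℝ E : ℝ) - 1].restrict (sphere (0 : E) r)) :=
    isFiniteMeasure_restrict.2 (hausdorffMeasure_sphere_lt_top hr).ne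
  obtain ⟨p, hpS, hp⟩ := (isCompact_sphere (0 : E) r).exists_infDist_eq_dist
    (NormedSpace.sphere_nonempty.2 hr.le) u
  obtain ⟨C, hC, hcap⟩ :=
    hausdorffMeasure_closedBall_inter_sphere_le hr (mem_sphere_zero_iff_norm.1 hpS)
  simp_rw [← dist_eq_norm]
  refine lintegral_ofReal_rpow_neg_dist_lt_top (R := r / 2)
    (C := C * ENNReal.ofReal (2 ^ ((finrank ℝ E : ℝ) - 1))) (by finiteness) ht htE
    (by positivity) fun ρ hρ hρr ↦ ?_
  rw [Measure.restrict_apply measurableSet_closedBall]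
  calc _ ≤ μH[(finrank ℝ E : ℝ) - 1] (closedBall p (2 * ρ) ∩ sphere 0 r) :=
        measure_mono (closedBall_inter_subset_closedBall_inter_of_infDist_eq hp ρ)
    _ ≤ C * ENNReal.ofReal ((2 * ρ) ^ ((finrank ℝ E : ℝ) - 1)) :=
        hcap _ (by positivity) (by linarith)
    _ = _ := by
        rw [Real.mul_rpow zero_le_two hρ.le, ENNReal.ofReal_mul (by positivity), mul_assoc]

end Sphere

/-- The Riesz kernel `‖u − v‖^{2−n}` is integrable with respect to the uniform probability
measure on the sphere of radius `r` in `ℝⁿ`, for every `u ∈ ℝⁿ` and `n ≥ 2`. -/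
theorem riesz_kernel_integrable_sphere (n : ℕ) (hn : 2 ≤ n) (r : ℝ) (hr : 0 < r)
    (u : EuclideanSpace ℝ (Fin n))
    (μ : Measure (EuclideanSpace ℝ (Fin n)))
    (hμ : μ = (μH[((n : ℝ) - 1)] (Metric.sphere (0 : EuclideanSpace ℝ (Fin n)) r))⁻¹ •
      (μH[((n : ℝ) - 1)]).restrict (Metric.sphere (0 : EuclideanSpace ℝ (Fin n)) r)) :
    ∫⁻ v, ENNReal.ofReal (‖u - v‖ ^ ((2 : ℝ) - n)) ∂μ < ⊤ := by
  subst hμ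
  rw [lintegral_smul_measure]
  rcases eq_or_ne (μH[(n : ℝ) - 1] (sphere (0 : EuclideanSpace ℝ (Fin n)) r)) 0 with h0 | h0
  · simp [Measure.restrict_eq_zero.2 h0]
  have hint := lintegral_rpow_neg_norm_sub_sphere_lt_top (E := EuclideanSpace ℝ (Fin n)) hr
    (t := n - 2) (by simpa using hn) (by simp) u
  rw [finrank_euclideanSpace_fin, neg_sub] at hint
  exact ENNReal.mul_lt_top (ENNReal.inv_lt_top.2 (pos_iff_ne_zero.2 h0)) hint
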